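/- arXiv:1803.05085 — 3 statements merged into one kernel-verified Lean document; each statement's English description precedes it below -/
import Mathlib

section
/- Let A be an n×n matrix over the field Z/2Z such that A_{i,j} + A_{j,i} = 1 for all i ≠ j (a tournament matrix over Z/2Z). Then the rank of A over Z/2Z is at least (n-1)/2. -/
/-!
In characteristic two a tournament matrix satisfies `A + Aᵀ + J = 1`, where `J = vecMulVec 1 1`
is the all-ones matrix: off the diagonal `1 + 1 = 0`, on it `2 A i i + 1 = 1`. Since rank is
subadditive, `rank Aᵀ = rank A` and `rank J ≤ 1`, this gives `n = rank 1 ≤ 2 rank A + 1`.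
-/

namespace Matrix

variable {m n K : Type*}

theorem rank_add_le [Field K] [Fintype n] (A B : Matrix m n K) :
    (A + B).rank ≤ A.rank + B.rank := by
  have hle : LinearMap.range (A + B).mulVecLin ≤
      LinearMap.range A.mulVecLin ⊔ LinearMap.range B.mulVecLin := by
    rintro x ⟨v, rfl⟩
    rw [mulVecLin_add]
    exact Submodule.add_mem_sup ⟨v, rfl⟩ ⟨v, rfl⟩
  exact (Submodule.finrank_mono hle).trans (Submodule.finrank_add_le_finrank_add_finrank _ _)

theorem add_transpose_add_vecMulVec_one_eq_one [DecidableEq n] [Ring K] [CharP K 2]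
    (A : Matrix n n K) (hA : ∀ i j, i ≠ j → A i j + A j i = 1) :
    A + Aᵀ + vecMulVec 1 1 = 1 := by
  ext i j
  rcases eq_or_ne i j with rfl | hij
  · simp [CharTwo.add_self_eq_zero]
  · simp [hA i j hij, hij, CharTwo.add_self_eq_zero]

theorem card_le_two_mul_rank_add_one [DecidableEq n] [Fintype n] [Field K] [CharP K 2]
    (A : Matrix n n K) (hA : ∀ i j, i ≠ j → A i j + A j i = 1) :
    Fintype.card n ≤ 2 * A.rank + 1 :=
  calc Fintype.card n = (1 : Matrix n n K).rank := rank_one.symm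
    _ = (A + Aᵀ + vecMulVec 1 1).rank := by rw [add_transpose_add_vecMulVec_one_eq_one A hA]
    _ ≤ A.rank + Aᵀ.rank + (vecMulVec 1 1 : Matrix n n K).rank :=
        (rank_add_le _ _).trans (add_le_add_left (rank_add_le _ _) _)
    _ ≤ 2 * A.rank + 1 := by
        rw [rank_transpose]
        linarith [rank_vecMulVec_le (1 : n → K) (1 : n → K)]

end Matrix

/-- A tournament matrix over `ZMod 2` has rank at least `(n-1)/2`. -/
theorem stmt_0 (n : ℕ) (A : Matrix (Fin n) (Fin n) (ZMod 2))
    (hA : ∀ i j : Fin n, i ≠ j → A i j + A j i = 1) :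
    (n - 1) / 2 ≤ A.rank := by
  have hcard := A.card_le_two_mul_rank_add_one hA
  rw [Fintype.card_fin] at hcard
  omega
end

section
/- Let V be a vector space over Z/2Z, let Ω : V × V → Z/2Z be a bilinear form, and suppose vectors γ_1, ..., γ_{t-1}, γ'_1, ..., γ'_{t-1} in V satisfy Ω(γ_i, γ'_j) + Ω(γ_j, γ'_i) = 1 for all i ≠ j. Then the dimension of V is at least (t-3)/2. -/
open Matrix Module LinearMap

lemma my_finrank_span_singleton_le {K V : Type*} [DivisionRing K] [AddCommGroup V]
    [Module K V] (v : V) :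
    Module.finrank K (Submodule.span K ({v} : Set V)) ≤ 1 := by
  by_cases hv : v = 0
  · subst hv
    rw [Submodule.span_zero_singleton]
    simp
  · rw [finrank_span_singleton hv]

/-- If a bilinear form `Ω` on a vector space `V` over `ZMod 2` and vectors
`γ_1,…,γ_{t-1}`, `γ'_1,…,γ'_{t-1}` satisfy `Ω γ_i γ'_j + Ω γ_j γ'_i = 1` for `i ≠ j`,
then `dim V ≥ (t-3)/2`, i.e. `t ≤ 2·dim V + 3`. -/
theorem stmt_5 (t : ℕ) (V : Type*) [AddCommGroup V] [Module (ZMod 2) V]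
    [FiniteDimensional (ZMod 2) V]
    (Ω : V →ₗ[ZMod 2] V →ₗ[ZMod 2] ZMod 2)
    (γ γ' : Fin (t - 1) → V)
    (h : ∀ i j : Fin (t - 1), i ≠ j →
      Ω (γ i) (γ' j) + Ω (γ j) (γ' i) = 1) :
    t ≤ 2 * Module.finrank (ZMod 2) V + 3 := by
  set A : Matrix (Fin (t - 1)) (Fin (t - 1)) (ZMod 2) := fun i j => Ω (γ i) (γ' j) with hA
  -- rank A ≤ finrank V
  have hrank : A.rank ≤ Module.finrank (ZMod 2) V := by
    set f : (Fin (t - 1) → ZMod 2) →ₗ[ZMod 2] V :=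
      Fintype.linearCombination (ZMod 2) γ' with hf
    set g : V →ₗ[ZMod 2] (Fin (t - 1) → ZMod 2) := LinearMap.pi (fun i => Ω (γ i)) with hg
    have hcomp : A.mulVecLin = g.comp f := by
      ext x i
      rw [LinearMap.comp_apply, Matrix.mulVecLin_apply]
      simp [hf, hg, Matrix.mulVecLin_apply, Matrix.mulVec, dotProduct,
        Fintype.linearCombination_apply, map_sum, hA, mul_comm, Pi.single_apply]
    calc A.rank = Module.finrank (ZMod 2) (LinearMap.range (g.comp f)) := by
          rw [Matrix.rank, hcomp]
      _ ≤ Module.finrank (ZMod 2) (LinearMap.range g) :=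
          Submodule.finrank_mono (LinearMap.range_comp_le_range f g)
      _ ≤ Module.finrank (ZMod 2) V := LinearMap.finrank_range_le g
  -- B = A + Aᵀ has off-diagonal ones and zero diagonal
  set B : Matrix (Fin (t - 1)) (Fin (t - 1)) (ZMod 2) := A + Aᵀ with hB
  have hBval : ∀ i j, B i j = if i = j then 0 else 1 := by
    intro i j
    by_cases hij : i = j
    · subst hij
      simp only [hB, Matrix.add_apply, Matrix.transpose_apply, if_pos rfl]
      exact CharTwo.add_self_eq_zero _
    · simp only [hB, Matrix.add_apply, Matrix.transpose_apply, if_neg hij, hA]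
      exact h i j hij
  -- kernel of B is at most 1-dimensional
  have hker : Module.finrank (ZMod 2) (LinearMap.ker B.mulVecLin) ≤ 1 := by
    have hle : LinearMap.ker B.mulVecLin ≤
        Submodule.span (ZMod 2) {(fun _ => 1 : Fin (t - 1) → ZMod 2)} := by
      intro x hx
      have hx' : ∀ i, ∑ j, B i j * x j = 0 := by
        intro i
        have := congrFun (LinearMap.mem_ker.mp hx) i
        simpa [Matrix.mulVecLin_apply, Matrix.mulVec, dotProduct] using this
      have hxi : ∀ i, x i = ∑ j, x j := by
        intro i
        have h1 : ∑ j, B i j * x j = (∑ j, x j) + x i := by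
          rw [← Finset.sum_erase_add _ _ (Finset.mem_univ i),
            ← Finset.sum_erase_add _ (fun j => x j) (Finset.mem_univ i)]
          have he : ∀ j ∈ Finset.univ.erase i, B i j * x j = x j := by
            intro j hj
            rw [hBval, if_neg (Ne.symm (Finset.ne_of_mem_erase hj)), one_mul]
          rw [Finset.sum_congr rfl he, hBval, if_pos rfl, zero_mul, add_zero,
            add_assoc, CharTwo.add_self_eq_zero, add_zero]
        have h2 := hx' i
        rw [h1] at h2
        have h3 := congrArg (· + x i) h2
        simpa [add_assoc, CharTwo.add_self_eq_zero] using h3.symm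
      have hxe : x = (∑ j, x j) • (fun _ => 1 : Fin (t - 1) → ZMod 2) := by
        funext i
        simp [hxi i]
      rw [hxe]
      exact Submodule.smul_mem _ _ (Submodule.mem_span_singleton_self _)
    calc Module.finrank (ZMod 2) (LinearMap.ker B.mulVecLin)
        ≤ Module.finrank (ZMod 2)
            (Submodule.span (ZMod 2) {(fun _ => 1 : Fin (t - 1) → ZMod 2)}) :=
          Submodule.finrank_mono hle
      _ ≤ 1 := my_finrank_span_singleton_le _
  -- rank-nullity : B.rank + ker = n
  have hrn : B.rank + Module.finrank (ZMod 2) (LinearMap.ker B.mulVecLin) = t - 1 := by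
    rw [Matrix.rank, LinearMap.finrank_range_add_finrank_ker, Module.finrank_fin_fun]
  -- B.rank ≤ 2 * A.rank
  have hBle : B.rank ≤ 2 * A.rank := by
    have hsub : LinearMap.range B.mulVecLin ≤
        LinearMap.range A.mulVecLin ⊔ LinearMap.range Aᵀ.mulVecLin := by
      rw [hB, Matrix.mulVecLin_add]
      rintro _ ⟨y, rfl⟩
      exact Submodule.add_mem_sup ⟨y, rfl⟩ ⟨y, rfl⟩
    calc B.rank ≤ Module.finrank (ZMod 2)
          (LinearMap.range A.mulVecLin ⊔ LinearMap.range Aᵀ.mulVecLin : Submodule _ _) :=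
          Submodule.finrank_mono hsub
      _ ≤ A.rank + Aᵀ.rank := Submodule.finrank_add_le_finrank_add_finrank _ _
      _ = 2 * A.rank := by rw [Matrix.rank_transpose]; ring
  omega
end

section
/- For all integers k', i, k, t with 0 ≤ 2k' < i ≤ k and for a nondecreasing function w : ℕ → ℕ, define W(k', i) = i·(i - 2k')·(w(i) + 2k). Then for any decomposition i = i_1 + i_2 with 1 ≤ i_1, i_2 ≤ i - 1 and integers k'_1, k'_2 with 2k'_1 ≤ i_1, 2k'_2 ≤ i_2, 2(k'_1 + k'_2) < i, we have W(k'_1, i_1) + W(k'_2, i_2) + w(i) + 2(k - i) ≤ W(k'_1 + k'_2, i). -/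
/-!
Put `a = i₁ - 2k'₁`, `b = i₂ - 2k'₂` and `c = w i + 2k`, so that `i - 2(k'₁ + k'₂) = a + b`.
Monotonicity of `w` bounds the left-hand side by `(i₁ a + i₂ b + 1) c`, while
`i (a + b) = i₁ a + i₂ b + (i₁ b + i₂ a)` and the cross term `i₁ b + i₂ a ≥ a + b` is positive.
-/

theorem mul_add_mul_add_one_le_add_mul_add {i₁ i₂ a b : ℕ} (hi₁ : 1 ≤ i₁) (hi₂ : 1 ≤ i₂)
    (hab : 1 ≤ a + b) : i₁ * a + i₂ * b + 1 ≤ (i₁ + i₂) * (a + b) := by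
  have hcross : a + b ≤ i₁ * b + i₂ * a := by nlinarith
  calc i₁ * a + i₂ * b + 1 ≤ i₁ * a + i₂ * b + (i₁ * b + i₂ * a) := by omega
    _ = (i₁ + i₂) * (a + b) := by ring

theorem stmt_16_general (i k i₁ i₂ k'₁ k'₂ : ℕ) (w : ℕ → ℕ) (hw : Monotone w)
    (hi : i = i₁ + i₂) (hi₁ : 1 ≤ i₁) (hi₂ : 1 ≤ i₂)
    (hk₁ : 2 * k'₁ ≤ i₁) (hk₂ : 2 * k'₂ ≤ i₂)
    (hks : 2 * (k'₁ + k'₂) < i) :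
    (i₁ * (i₁ - 2 * k'₁) * (w i₁ + 2 * k)) + (i₂ * (i₂ - 2 * k'₂) * (w i₂ + 2 * k)) +
        w i + 2 * (k - i)
      ≤ i * (i - 2 * (k'₁ + k'₂)) * (w i + 2 * k) := by
  have hw₁ : w i₁ ≤ w i := hw (by omega)
  have hw₂ : w i₂ ≤ w i := hw (by omega)
  have hkey : i₁ * (i₁ - 2 * k'₁) + i₂ * (i₂ - 2 * k'₂) + 1 ≤ i * (i - 2 * (k'₁ + k'₂)) := by
    rw [show i - 2 * (k'₁ + k'₂) = (i₁ - 2 * k'₁) + (i₂ - 2 * k'₂) by omega, hi]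
    exact mul_add_mul_add_one_le_add_mul_add hi₁ hi₂ (by omega)
  calc (i₁ * (i₁ - 2 * k'₁) * (w i₁ + 2 * k)) + (i₂ * (i₂ - 2 * k'₂) * (w i₂ + 2 * k)) +
          w i + 2 * (k - i)
      ≤ (i₁ * (i₁ - 2 * k'₁) + i₂ * (i₂ - 2 * k'₂) + 1) * (w i + 2 * k) := by
        rw [add_mul, add_mul, one_mul, add_assoc _ (w i)]
        gcongr
        omega
    _ ≤ i * (i - 2 * (k'₁ + k'₂)) * (w i + 2 * k) := Nat.mul_le_mul_right _ hkey

/-- The potential-function inequality from the proof of Theorem 4.2: with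
`W k' j = j·(j - 2k')·(w j + 2k)` for a nondecreasing `w`, if `i = i₁ + i₂` with
`1 ≤ i₁, i₂ ≤ i - 1`, `2k'₁ ≤ i₁`, `2k'₂ ≤ i₂` and `2(k'₁ + k'₂) < i`, then
`W k'₁ i₁ + W k'₂ i₂ + w i + 2(k - i) ≤ W (k'₁ + k'₂) i`. -/
theorem stmt_16 (k' i k t i₁ i₂ k'₁ k'₂ : ℕ) (w : ℕ → ℕ) (hw : Monotone w)
    (h1 : 2 * k' < i) (h2 : i ≤ k)
    (hi : i = i₁ + i₂) (hi₁ : 1 ≤ i₁) (hi₂ : 1 ≤ i₂)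
    (hi₁' : i₁ ≤ i - 1) (hi₂' : i₂ ≤ i - 1)
    (hk₁ : 2 * k'₁ ≤ i₁) (hk₂ : 2 * k'₂ ≤ i₂)
    (hks : 2 * (k'₁ + k'₂) < i) :
    (i₁ * (i₁ - 2 * k'₁) * (w i₁ + 2 * k)) + (i₂ * (i₂ - 2 * k'₂) * (w i₂ + 2 * k)) +
        w i + 2 * (k - i)
      ≤ i * (i - 2 * (k'₁ + k'₂)) * (w i + 2 * k) :=
  stmt_16_general i k i₁ i₂ k'₁ k'₂ w hw hi hi₁ hi₂ hk₁ hk₂ hks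
end
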